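/- Let p be an odd prime, q = p^r, and write i = i_0 p^{n(i)} with p ∤ i_0. Let u = t + u_{qi+1}t^{qi+1}, v = t + v_{qj+1}t^{qj+1} + … in T(q) with u_{qi+1} v_{qj+1} ≠ 0, and suppose i > j·(q p^{n(i)} - 1)/(q - 1). Then [u,v] = t + i_0 u_{qi+1} v_{qj+1} t^{1 + q(q p^{n(i)} j + i)} + (higher order terms). -/

import Mathlib

/-- Composition (substitution) of formal power series: `psComp f g = f(g(t))`. -/
noncomputable def psComp {R : Type*} [CommRing R] (f g : PowerSeries R) : PowerSeries R :=
  PowerSeries.mk fun n =>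
    ∑ k ∈ Finset.range (n + 1), PowerSeries.coeff k f * PowerSeries.coeff n (g ^ k)

/-- Membership in the Fesenko group `T(q)`: power series of the form
`t + Σ_{k≥1} a_{qk+1} t^{qk+1}` over `𝔽_p`. -/
def InT (p q : ℕ) (u : PowerSeries (ZMod p)) : Prop :=
  PowerSeries.coeff 1 u = 1 ∧
  ∀ m : ℕ, m ≠ 1 → (¬ ∃ k, 1 ≤ k ∧ m = q * k + 1) → PowerSeries.coeff m u = 0

/-!
Write `u = X (1 + a X^{qi})` and `v = X (1 + g)`, where `g` involves only powers `X^{qt}` with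
`t ≥ j` and has leading term `b X^{qj}`. Put `P = q p^s`, so that `qi + 1 = 1 + i₀ P`, and
`N = 1 + q (P j + i)`. All congruences are modulo `X^{N+1}`.

* `u ∘ v = v + a v^{1 + i₀ P}` and, by Frobenius, `(1 + g)^{1 + i₀ P} = (1 + g) (1 + g^P)^{i₀}`,
  which is `1 + g + i₀ b X^{P q j}` up to terms of order beyond `N - (qi + 1)`.
  Hence `u ∘ v ≡ u (1 + g) + i₀ a b X^N`.
* `v ∘ u = u · (1 + g)(u)` and `u^{qt} = X^{qt} (1 + a^q X^{q²i})^t ≡ X^{qt}` for `t ≥ j`: this is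
  exactly where `(q - 1) i > j (P - 1)` is needed. Hence `v ∘ u ≡ u (1 + g)`.

The commutator `w = u⁻¹ ∘ v⁻¹ ∘ u ∘ v` satisfies `(v ∘ u) ∘ w = u ∘ v`; as `v ∘ u` is tangent to
the identity, comparing coefficients degree by degree gives `w ≡ X + i₀ a b X^N`.
-/

open PowerSeries Finset

namespace PowerSeries

variable {R : Type*} [CommRing R]

theorem coeff_subst_eq_sum {f g : R⟦X⟧} (hg : constantCoeff g = 0) (n : ℕ) :
    coeff n (f.subst g) = ∑ d ∈ range (n + 1), coeff d f * coeff n (g ^ d) := by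
  rw [coeff_subst' (HasSubst.of_constantCoeff_zero' hg), finsum_eq_sum_of_support_subset]
  · rfl
  · intro d hd
    rw [Function.mem_support] at hd
    rw [coe_range, Set.mem_Iio, Nat.lt_succ_iff]
    by_contra! hnd
    exact hd (by rw [X_pow_dvd_iff.mp (pow_dvd_pow_of_dvd (X_dvd_iff.mpr hg) d) n hnd, smul_zero])

theorem _root_.psComp_eq_subst {f g : R⟦X⟧} (hg : constantCoeff g = 0) :
    psComp f g = f.subst g := by
  ext n
  rw [coeff_subst_eq_sum hg, psComp, coeff_mk]

theorem _root_.constantCoeff_psComp (f g : R⟦X⟧) :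
    constantCoeff (psComp f g) = constantCoeff f := by
  simp [psComp, ← coeff_zero_eq_constantCoeff]

theorem coeff_one_subst {f g : R⟦X⟧} (hg : constantCoeff g = 0) :
    coeff 1 (f.subst g) = coeff 1 f * coeff 1 g := by
  simp [coeff_subst_eq_sum hg, sum_range_succ]

theorem X_pow_dvd_subst_sub_self {f g : R⟦X⟧} (hg : constantCoeff g = 0) {K : ℕ}
    (h : ∀ d, coeff d f ≠ 0 → X ^ K ∣ g ^ d - X ^ d) : X ^ K ∣ f.subst g - f := by
  refine X_pow_dvd_iff.mpr fun n hn => ?_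
  rw [map_sub, coeff_subst_eq_sum hg, sub_eq_zero]
  calc ∑ d ∈ range (n + 1), coeff d f * coeff n (g ^ d)
      = ∑ d ∈ range (n + 1), coeff d f * coeff n (X ^ d : R⟦X⟧) := by
        refine sum_congr rfl fun d _ => ?_
        by_cases hd : coeff d f = 0
        · rw [hd, zero_mul, zero_mul]
        · rw [← sub_eq_zero, ← mul_sub, ← map_sub, X_pow_dvd_iff.mp (h d hd) n hn, mul_zero]
    _ = coeff n f := by simp [coeff_X_pow]

theorem X_pow_succ_dvd_pow_sub_X_pow {w : R⟦X⟧} {n k : ℕ} (hn : 1 ≤ n) (hw : X ^ n ∣ w - X)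
    (hk : 2 ≤ k) : X ^ (n + 1) ∣ w ^ k - X ^ k := by
  have hXw : X ∣ w := by
    simpa using dvd_add ((dvd_pow_self X (by omega)).trans hw) (dvd_refl X)
  rw [← geom_sum₂_mul, pow_succ']
  refine mul_dvd_mul (dvd_sum fun l _ => ?_) hw
  rcases Nat.eq_zero_or_pos l with rfl | hl0
  · exact (dvd_pow_self X (by omega)).mul_left _
  · exact (dvd_pow hXw hl0.ne').mul_right _

theorem coeff_subst_of_X_pow_dvd_sub_X {G w : R⟦X⟧} (hG : coeff 1 G = 1) {n : ℕ} (hn : 2 ≤ n)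
    (hw : X ^ n ∣ w - X) : coeff n (G.subst w) = coeff n G + coeff n w := by
  have hw0 : constantCoeff w = 0 := by simpa using X_pow_dvd_iff.mp hw 0 (by omega)
  have hpow : ∀ d, coeff n (w ^ d) = coeff n (X ^ d : R⟦X⟧) + if d = 1 then coeff n w else 0 := by
    rintro (_ | _ | d)
    · simp
    · simp [coeff_X, show n ≠ 1 by omega]
    · have := X_pow_dvd_iff.mp
        (X_pow_succ_dvd_pow_sub_X_pow (k := d + 2) (by omega) hw (by omega)) n (by omega)
      rw [map_sub, sub_eq_zero] at this
      simp [this]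
  simp [coeff_subst_eq_sum hw0, hpow, mul_add, sum_add_distrib, coeff_X_pow, hG,
    show 1 < n + 1 by omega]

theorem X_pow_dvd_sub_X_of_subst_eq {F G w : R⟦X⟧} (hG : coeff 1 G = 1)
    (hw0 : constantCoeff w = 0) (hGw : G.subst w = F) {N : ℕ} (hN : 2 ≤ N)
    (hFG : X ^ N ∣ F - G) : X ^ N ∣ w - X := by
  induction N, hN using Nat.le_induction with
  | base =>
    refine X_pow_dvd_iff.mpr fun n hn => ?_
    interval_cases n
    · simpa using hw0
    · have := X_pow_dvd_iff.mp hFG 1 (by omega)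
      rw [map_sub, sub_eq_zero, ← hGw, coeff_one_subst hw0, hG, one_mul] at this
      simp [this]
  | succ N hN ih =>
    have hXN := ih ((pow_dvd_pow X N.le_succ).trans hFG)
    refine X_pow_dvd_iff.mpr fun n hn => ?_
    rcases Nat.lt_succ_iff_lt_or_eq.mp hn with hn | rfl
    · exact X_pow_dvd_iff.mp hXN n hn
    · have := X_pow_dvd_iff.mp hFG n hn
      rw [map_sub, sub_eq_zero, ← hGw, coeff_subst_of_X_pow_dvd_sub_X hG hN hXN,
        add_eq_left] at this
      simp [this, coeff_X, show n ≠ 1 by omega]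

theorem X_pow_dvd_sub_X_add_C_mul_X_pow_of_subst_eq {F G w : R⟦X⟧} (hG : coeff 1 G = 1)
    (hw0 : constantCoeff w = 0) (hGw : G.subst w = F) {N : ℕ} (hN : 2 ≤ N) {c : R}
    (hFG : X ^ (N + 1) ∣ F - G - C c * X ^ N) : X ^ (N + 1) ∣ w - (X + C c * X ^ N) := by
  have hXN : X ^ N ∣ F - G := by
    simpa using dvd_add ((pow_dvd_pow X N.le_succ).trans hFG) (dvd_mul_left (X ^ N) (C c))
  have hw := X_pow_dvd_sub_X_of_subst_eq hG hw0 hGw hN hXN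
  have hcN := X_pow_dvd_iff.mp hFG N N.lt_succ_self
  rw [map_sub, map_sub, ← hGw, coeff_subst_of_X_pow_dvd_sub_X hG hN hw] at hcN
  refine X_pow_dvd_iff.mpr fun n hn => ?_
  rcases Nat.lt_succ_iff_lt_or_eq.mp hn with hn | rfl
  · simpa [coeff_C_mul_X_pow, hn.ne] using X_pow_dvd_iff.mp hw n hn
  · simp only [coeff_C_mul_X_pow, if_true] at hcN
    simp only [map_sub, map_add, coeff_X, show n ≠ 1 by omega, ↓reduceIte, coeff_C_mul,
      coeff_X_pow, mul_one, zero_add]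
    linear_combination hcN

-- `subst g f` is `f ∘ g`, so this reads `(v ∘ u) ∘ (u' ∘ v' ∘ u ∘ v) = u ∘ v`.
theorem subst_commutator {u v u' v' : R⟦X⟧} (hu : constantCoeff u = 0)
    (hv : constantCoeff v = 0) (hu' : constantCoeff u' = 0) (hv' : constantCoeff v' = 0)
    (huu' : u.subst u' = X) (hvv' : v.subst v' = X) :
    subst (subst v (subst u (subst v' u') : R⟦X⟧) : R⟦X⟧) (subst u v : R⟦X⟧) = subst v u := by
  have hs {f : R⟦X⟧} (h : constantCoeff f = 0) : HasSubst f := HasSubst.of_constantCoeff_zero' h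
  have hvu : constantCoeff (subst v u : R⟦X⟧) = 0 := constantCoeff_subst_eq_zero hv u hu
  set Z : R⟦X⟧ := subst (subst v u : R⟦X⟧) v' with hZ
  have hZ0 : constantCoeff Z = 0 := constantCoeff_subst_eq_zero hvu v' hv'
  have hW : (subst v (subst u (subst v' u') : R⟦X⟧) : R⟦X⟧) = subst Z u' := by
    rw [subst_comp_subst_apply (hs hv') (hs hu),
      subst_comp_subst_apply (hs (constantCoeff_subst_eq_zero hu v' hv')) (hs hv),
      subst_comp_subst_apply (hs hu) (hs hv)]
  have hWu : (subst (subst Z u' : R⟦X⟧) u : R⟦X⟧) = Z := by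
    rw [← subst_comp_subst_apply (hs hu') (hs hZ0), huu', subst_X (hs hZ0)]
  rw [hW, subst_comp_subst_apply (hs hu) (hs (constantCoeff_subst_eq_zero hZ0 u' hu')), hWu,
    hZ, ← subst_comp_subst_apply (hs hv') (hs hvu), hvv', subst_X (hs hvu)]

theorem eq_X_mul_one_add_X_pow_mul_C {u : R⟦X⟧} {L : ℕ} {a : R} (hL : 1 ≤ L)
    (h1 : coeff 1 u = 1) (ha : coeff (L + 1) u = a)
    (h0 : ∀ m, m ≠ 1 → m ≠ L + 1 → coeff m u = 0) : u = X * (1 + X ^ L * C a) := by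
  ext (_ | n)
  · simp [h0 0 (by omega) (by omega)]
  · rw [coeff_succ_X_mul, map_add, coeff_one, coeff_X_pow_mul']
    rcases eq_or_ne n 0 with rfl | hn0
    · simp [h1, show ¬ L ≤ 0 by omega]
    rcases eq_or_ne n L with rfl | hnL
    · simp [ha, hn0]
    · rw [h0 _ (by omega) (by omega), if_neg hn0, zero_add]
      split_ifs with hLn
      · rw [coeff_C, if_neg (by omega)]
      · rfl

theorem X_pow_dvd_pow_sub_C_mul_X_pow {g : R⟦X⟧} {m : ℕ} (hg : X ^ m ∣ g) (k : ℕ) :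
    X ^ (k * m + 1) ∣ g ^ k - C (coeff m g ^ k) * X ^ (k * m) := by
  obtain ⟨g₁, rfl⟩ := hg
  have h₁ : X ∣ g₁ - C (constantCoeff g₁) := by
    rw [X_dvd_iff]; simp
  have : (X ^ m * g₁) ^ k - C (coeff m (X ^ m * g₁) ^ k) * X ^ (k * m)
      = X ^ (k * m) * (g₁ ^ k - C (constantCoeff g₁) ^ k) := by
    rw [coeff_X_pow_mul', if_pos le_rfl, Nat.sub_self, coeff_zero_eq_constantCoeff, map_pow]
    ring
  rw [this, pow_succ]
  exact mul_dvd_mul_left _ (h₁.trans (sub_dvd_pow_sub_pow _ _ _))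

section CharP

variable (p : ℕ) [Fact p.Prime] [CharP R p]

instance : CharP R⟦X⟧ p := charP_of_injective_algebraMap C_injective p

variable {p}

theorem X_pow_dvd_one_add_pow_sub {g : R⟦X⟧} {m : ℕ} (hm : 1 ≤ m) (hg : X ^ m ∣ g) (c e : ℕ) :
    X ^ (p ^ e * m + 1) ∣
      (1 + g) ^ (1 + c * p ^ e) - (1 + g) - C (c * coeff m g ^ p ^ e) * X ^ (p ^ e * m) := by
  set P := p ^ e
  have hP : 1 ≤ P := Nat.one_le_pow _ _ (Fact.out : p.Prime).pos
  obtain ⟨z, hz⟩ := sq_dvd_add_pow_sub_sub (g ^ P) 1 c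
  have hfrob : (1 + g) ^ P = 1 + g ^ P := by rw [add_pow_char_pow, one_pow]
  have hsplit : (1 + g) ^ (1 + c * P) - (1 + g) - C (c * coeff m g ^ P) * X ^ (P * m)
      = (c : R⟦X⟧) * (g ^ P - C (coeff m g ^ P) * X ^ (P * m)) + (c : R⟦X⟧) * g ^ (P + 1)
        + (1 + g) * (g ^ P) ^ 2 * z := by
    rw [pow_add, pow_one, pow_mul', hfrob, map_mul, map_natCast]
    linear_combination (1 + g) * hz
  have hpow (k : ℕ) (hk : P * m + 1 ≤ m * k) : X ^ (P * m + 1) ∣ g ^ k :=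
    (pow_dvd_pow (X : R⟦X⟧) hk).trans (pow_mul (X : R⟦X⟧) m k ▸ pow_dvd_pow_of_dvd hg k)
  rw [hsplit]
  refine dvd_add (dvd_add ((X_pow_dvd_pow_sub_C_mul_X_pow hg P).mul_left _)
    ((hpow (P + 1) (by nlinarith)).mul_left _)) ?_
  rw [← pow_mul]
  exact ((hpow (P * 2) (by nlinarith)).mul_left _).mul_right _

theorem X_pow_dvd_X_mul_one_add_pow_sub (L t e : ℕ) (y : R⟦X⟧) :
    X ^ (p ^ e * t + p ^ e * L) ∣ (X * (1 + X ^ L * y)) ^ (p ^ e * t) - X ^ (p ^ e * t) := by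
  have hfrob : (1 + X ^ L * y) ^ p ^ e = 1 + X ^ (p ^ e * L) * y ^ p ^ e := by
    rw [add_pow_char_pow, one_pow, mul_pow, ← pow_mul, mul_comm L]
  rw [mul_pow, pow_mul (1 + _), hfrob, ← mul_sub_one, pow_add]
  refine mul_dvd_mul_left _ ((dvd_mul_right _ (y ^ p ^ e)).trans ?_)
  have := sub_one_dvd_pow_sub_one (1 + X ^ (p ^ e * L) * y ^ p ^ e) t
  rwa [add_sub_cancel_left] at this

theorem subst_X_mul_one_add_X_pow_mul_C {v : R⟦X⟧} (hv : constantCoeff v = 0) (L : ℕ) (a : R) :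
    (X * (1 + X ^ L * C a)).subst v = v * (1 + v ^ L * C a) := by
  have hs := HasSubst.of_constantCoeff_zero' hv
  rw [← coe_substAlgHom hs, ← algebraMap_eq, map_mul, map_add, map_one, map_mul, map_pow,
    AlgHom.commutes, substAlgHom_X hs]

theorem X_pow_dvd_subst_X_mul_one_add_sub {g : R⟦X⟧} {m : ℕ} (hm : 1 ≤ m) (hg : X ^ m ∣ g)
    (a : R) (c e : ℕ) :
    X ^ (1 + c * p ^ e + p ^ e * m + 1) ∣
      (X * (1 + X ^ (c * p ^ e) * C a)).subst (X * (1 + g)) - X * (1 + g)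
        - C a * X ^ (1 + c * p ^ e) * (1 + g)
        - C (c * a * coeff m g ^ p ^ e) * X ^ (1 + c * p ^ e + p ^ e * m) := by
  have hexpand : (X * (1 + X ^ (c * p ^ e) * C a)).subst (X * (1 + g)) - X * (1 + g)
        - C a * X ^ (1 + c * p ^ e) * (1 + g)
        - C (c * a * coeff m g ^ p ^ e) * X ^ (1 + c * p ^ e + p ^ e * m)
      = X ^ (1 + c * p ^ e) * (C a * ((1 + g) ^ (1 + c * p ^ e) - (1 + g)
        - C (c * coeff m g ^ p ^ e) * X ^ (p ^ e * m))) := by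
    rw [subst_X_mul_one_add_X_pow_mul_C (by simp), mul_pow, map_mul, map_mul, map_mul, map_natCast]
    ring
  rw [hexpand, add_assoc _ (p ^ e * m), pow_add]
  exact mul_dvd_mul_left _ ((X_pow_dvd_one_add_pow_sub hm hg c e).mul_left _)

theorem X_pow_dvd_X_mul_one_add_subst_sub_mul {g : R⟦X⟧} {L e K : ℕ} (a : R)
    (hg : ∀ d, coeff d g ≠ 0 → ∃ t, K ≤ p ^ e * t + p ^ e * L ∧ d = p ^ e * t) :
    X ^ (K + 1) ∣
      (X * (1 + g)).subst (X * (1 + X ^ L * C a)) - X * (1 + X ^ L * C a) * (1 + g) := by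
  set u : R⟦X⟧ := X * (1 + X ^ L * C a)
  have hu : constantCoeff u = 0 := by simp [u]
  have hK : X ^ K ∣ (1 + g).subst u - (1 + g) := by
    refine X_pow_dvd_subst_sub_self hu fun d hd => ?_
    rcases eq_or_ne d 0 with rfl | hd0
    · simp
    · rw [map_add, coeff_one, if_neg hd0, zero_add] at hd
      obtain ⟨t, hKt, rfl⟩ := hg _ hd
      exact (pow_dvd_pow X hKt).trans (X_pow_dvd_X_mul_one_add_pow_sub L t e _)
  rw [subst_mul (HasSubst.of_constantCoeff_zero' hu), subst_X (HasSubst.of_constantCoeff_zero' hu),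
    ← mul_sub, pow_succ']
  exact mul_dvd_mul (dvd_mul_right X _) hK

theorem X_pow_dvd_subst_sub_subst_sub {g : R⟦X⟧} {e f c j : ℕ} (a : R) (hj : 1 ≤ j)
    (hg : X ^ (p ^ e * j) ∣ g) (hsupp : ∀ d, coeff d g ≠ 0 → ∃ t, j ≤ t ∧ d = p ^ e * t)
    (hbig : (p ^ e - 1) * (c * p ^ f) > j * (p ^ e * p ^ f - 1)) :
    X ^ (1 + p ^ e * (p ^ e * p ^ f * j + c * p ^ f) + 1) ∣
      (X * (1 + X ^ (p ^ e * (c * p ^ f)) * C a)).subst (X * (1 + g))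
        - (X * (1 + g)).subst (X * (1 + X ^ (p ^ e * (c * p ^ f)) * C a))
        - C (c * a * coeff (p ^ e * j) g ^ p ^ (e + f))
          * X ^ (1 + p ^ e * (p ^ e * p ^ f * j + c * p ^ f)) := by
  have hpe : 0 < p ^ e := pow_pos (Fact.out : p.Prime).pos e
  have hpf : 0 < p ^ f := pow_pos (Fact.out : p.Prime).pos f
  set N := 1 + c * p ^ (e + f) + p ^ (e + f) * (p ^ e * j)
  have hN : 1 + p ^ e * (p ^ e * p ^ f * j + c * p ^ f) = N := by ring
  have hL : p ^ e * (c * p ^ f) = c * p ^ (e + f) := by ring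
  have hNle : N ≤ p ^ e * j + p ^ e * (c * p ^ (e + f)) := by
    zify [Nat.one_le_iff_ne_zero.mpr hpe.ne', Nat.one_le_iff_ne_zero.mpr (Nat.mul_pos hpe hpf).ne']
      at hbig ⊢
    rw [pow_add]
    nlinarith [mul_le_mul_of_nonneg_left (Int.add_one_le_of_lt hbig) (Int.natCast_nonneg (p ^ e))]
  have hF := X_pow_dvd_subst_X_mul_one_add_sub (Nat.mul_pos hpe hj) hg a c (e + f)
  have hG := X_pow_dvd_X_mul_one_add_subst_sub_mul (K := N) (L := c * p ^ (e + f)) a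
    fun d hd => by
      obtain ⟨t, hjt, rfl⟩ := hsupp d hd
      exact ⟨t, by nlinarith [Nat.mul_le_mul_left (p ^ e) hjt], rfl⟩
  rw [hN, hL]
  convert dvd_sub hF hG using 1
  ring

end CharP

end PowerSeries

theorem coeff_psComp_commutator {R : Type*} [CommRing R] {u v u' v' : R⟦X⟧}
    (hu : constantCoeff u = 0) (hv : constantCoeff v = 0) (hu1 : coeff 1 u = 1)
    (hv1 : coeff 1 v = 1) (hu' : psComp u u' = X ∧ psComp u' u = X)
    (hv' : psComp v v' = X ∧ psComp v' v = X) {N : ℕ} (hN : 2 ≤ N) {c : R}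
    (hFG : X ^ (N + 1) ∣ u.subst v - v.subst u - C c * X ^ N) :
    let w := psComp (psComp (psComp u' v') u) v
    constantCoeff w = 0 ∧ coeff 1 w = 1 ∧ (∀ m, 1 < m → m < N → coeff m w = 0) ∧
      coeff N w = c := by
  intro w
  have hu'0 : constantCoeff u' = 0 := by
    simpa [constantCoeff_psComp] using congrArg constantCoeff hu'.2
  have hv'0 : constantCoeff v' = 0 := by
    simpa [constantCoeff_psComp] using congrArg constantCoeff hv'.2
  have hw : w = subst v (subst u (subst v' u') : R⟦X⟧) := by
    simp only [w, psComp_eq_subst hv'0, psComp_eq_subst hu, psComp_eq_subst hv]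
  have hw0 : constantCoeff w = 0 := hw ▸ constantCoeff_subst_eq_zero hv _
    (constantCoeff_subst_eq_zero hu _ (constantCoeff_subst_eq_zero hv'0 _ hu'0))
  have hres := X_pow_dvd_sub_X_add_C_mul_X_pow_of_subst_eq
    (by rw [coeff_one_subst hu, hv1, hu1, one_mul]) hw0
    (hw ▸ subst_commutator hu hv hu'0 hv'0 (psComp_eq_subst hu'0 ▸ hu'.1)
      (psComp_eq_subst hv'0 ▸ hv'.1)) hN hFG
  have hc (n : ℕ) (hn : n ≤ N) : coeff n w = (if n = 1 then 1 else 0) + if n = N then c else 0 := by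
    have := X_pow_dvd_iff.mp hres n (by omega)
    rwa [map_sub, map_add, coeff_X, coeff_C_mul_X_pow, sub_eq_zero] at this
  refine ⟨?_, ?_, fun m h1 h2 => ?_, ?_⟩
  · simpa [show 0 ≠ N by omega] using hc 0 (by omega)
  · simpa [show 1 ≠ N by omega] using hc 1 (by omega)
  · simpa [h2.ne, show m ≠ 1 by omega] using hc m h2.le
  · simpa [show N ≠ 1 by omega] using hc N le_rfl

theorem InT.exists_eq_X_mul_one_add {p q j : ℕ} {v : (ZMod p)⟦X⟧} (hqj : 0 < q * j)
    (hv : InT p q v) (hlow : ∀ m, 1 < m → m < q * j + 1 → coeff m v = 0) :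
    ∃ g, v = X * (1 + g) ∧ X ^ (q * j) ∣ g ∧ coeff (q * j) g = coeff (q * j + 1) v ∧
      ∀ d, coeff d g ≠ 0 → ∃ t, j ≤ t ∧ d = q * t := by
  have hq : 0 < q := Nat.pos_of_mul_pos_right hqj
  refine ⟨mk fun d => if d = 0 then 0 else coeff (d + 1) v, ?_, ?_, ?_, ?_⟩
  · ext (_ | n)
    · simpa using hv.2 0 (by omega) (by omega)
    · rcases eq_or_ne n 0 with rfl | hn0
      · simp [hv.1]
      · simp [coeff_succ_X_mul, coeff_one, hn0]
  · refine X_pow_dvd_iff.mpr fun d hd => ?_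
    rw [coeff_mk]
    split_ifs with hd0
    · rfl
    · exact hlow _ (by omega) (by omega)
  · simp [hqj.ne']
  · intro d hd
    rw [coeff_mk, ite_ne_left_iff] at hd
    obtain ⟨hd0, hd⟩ := hd
    replace hd := hd.symm
    by_cases hex : ∃ k, 1 ≤ k ∧ d + 1 = q * k + 1
    · obtain ⟨k, -, hk⟩ := hex
      refine ⟨k, ?_, by omega⟩
      by_contra! hkj
      have : q * k < q * j := Nat.mul_lt_mul_of_pos_left hkj hq
      exact hd (hlow (d + 1) (by omega) (by omega))
    · exact absurd (hv.2 _ (by omega) hex) hd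

theorem stmt_10_general (p r : ℕ) (hp : p.Prime) (q : ℕ) (hq : q = p ^ r)
    (i j i₀ s : ℕ) (hj : 1 ≤ j) (hi : i = i₀ * p ^ s)
    -- the hypothesis i > j·(q p^{n(i)} - 1)/(q - 1), cleared of the denominator
    (hbig : (q - 1) * i > j * (q * p ^ s - 1))
    (a b : ZMod p)
    (u v : PowerSeries (ZMod p))
    -- u = t + u_{qi+1} t^{qi+1} exactly
    (hu1 : PowerSeries.coeff 1 u = 1)
    (hua : PowerSeries.coeff (q * i + 1) u = a)
    (hurest : ∀ m, m ≠ 1 → m ≠ q * i + 1 → PowerSeries.coeff m u = 0)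
    -- v = t + v_{qj+1} t^{qj+1} + … ∈ T(q)
    (hv : InT p q v)
    (hvb : PowerSeries.coeff (q * j + 1) v = b)
    (hvlow : ∀ m, 1 < m → m < q * j + 1 → PowerSeries.coeff m v = 0)
    -- u', v' are the compositional inverses of u, v
    (u' v' : PowerSeries (ZMod p))
    (hu' : psComp u u' = PowerSeries.X ∧ psComp u' u = PowerSeries.X)
    (hv' : psComp v v' = PowerSeries.X ∧ psComp v' v = PowerSeries.X) :
    -- [u,v] = t + i₀ u_{qi+1} v_{qj+1} t^{1+q(q p^s j + i)} + (higher order terms)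
    let w := psComp (psComp (psComp u' v') u) v
    PowerSeries.constantCoeff w = 0 ∧
    PowerSeries.coeff 1 w = 1 ∧
    (∀ m, 1 < m → m < 1 + q * (q * p ^ s * j + i) → PowerSeries.coeff m w = 0) ∧
    PowerSeries.coeff (1 + q * (q * p ^ s * j + i)) w = (i₀ : ZMod p) * a * b := by
  intro w
  have := Fact.mk hp
  subst hq hi
  have hqj : 0 < p ^ r * j := Nat.mul_pos (pow_pos hp.pos r) hj
  have hqi : 0 < p ^ r * (i₀ * p ^ s) :=
    Nat.mul_pos (pow_pos hp.pos r) (Nat.pos_of_ne_zero fun h => by simp [h] at hbig)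
  have hu := eq_X_mul_one_add_X_pow_mul_C hqi hu1 hua hurest
  obtain ⟨g, hvg, hg, hgb, hgsupp⟩ := hv.exists_eq_X_mul_one_add hqj hvlow
  have hFG := X_pow_dvd_subst_sub_subst_sub (p := p) a hj hg hgsupp hbig
  rw [← hu, ← hvg, hgb, hvb, ZMod.pow_card_pow] at hFG
  exact coeff_psComp_commutator (by simp [hu]) (by simp [hvg]) hu1 hv.1 hu' hv' (by nlinarith) hFG

theorem stmt_10 (p r : ℕ) (hp : p.Prime) (hpodd : Odd p) (hr : 1 ≤ r) (q : ℕ) (hq : q = p ^ r)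
    (i j i₀ s : ℕ) (hj : 1 ≤ j) (hi : i = i₀ * p ^ s) (hi₀ : ¬ p ∣ i₀)
    -- the hypothesis i > j·(q p^{n(i)} - 1)/(q - 1), cleared of the denominator
    (hbig : (q - 1) * i > j * (q * p ^ s - 1))
    (a b : ZMod p) (hab : a * b ≠ 0)
    (u v : PowerSeries (ZMod p))
    -- u = t + u_{qi+1} t^{qi+1} exactly
    (hu1 : PowerSeries.coeff 1 u = 1)
    (hua : PowerSeries.coeff (q * i + 1) u = a)
    (hurest : ∀ m, m ≠ 1 → m ≠ q * i + 1 → PowerSeries.coeff m u = 0)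
    -- v = t + v_{qj+1} t^{qj+1} + … ∈ T(q)
    (hv : InT p q v)
    (hvb : PowerSeries.coeff (q * j + 1) v = b)
    (hvlow : ∀ m, 1 < m → m < q * j + 1 → PowerSeries.coeff m v = 0)
    -- u', v' are the compositional inverses of u, v
    (u' v' : PowerSeries (ZMod p))
    (hu' : psComp u u' = PowerSeries.X ∧ psComp u' u = PowerSeries.X)
    (hv' : psComp v v' = PowerSeries.X ∧ psComp v' v = PowerSeries.X) :
    -- [u,v] = t + i₀ u_{qi+1} v_{qj+1} t^{1+q(q p^s j + i)} + (higher order terms)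
    let w := psComp (psComp (psComp u' v') u) v
    PowerSeries.constantCoeff w = 0 ∧
    PowerSeries.coeff 1 w = 1 ∧
    (∀ m, 1 < m → m < 1 + q * (q * p ^ s * j + i) → PowerSeries.coeff m w = 0) ∧
    PowerSeries.coeff (1 + q * (q * p ^ s * j + i)) w = (i₀ : ZMod p) * a * b :=
  stmt_10_general p r hp q hq i j i₀ s hj hi hbig a b u v hu1 hua hurest hv hvb hvlow u' v' hu' hv'
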